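/- (Uniqueness of concise subsets) For the inference relation ⊢ induced by regular AACBR, if D has a concise subset w.r.t. D, then it is unique: any two concise subsets of D w.r.t. D are equal. -/

import Mathlib

open Classical

/-- A case: a characterisation together with an outcome. The two possible outcomes
`Y = {δ, δ̄}` are modelled by `Bool`. -/
abbrev Case (X : Type*) := X × Bool

/-- An argument of a mined AF: either a labelled case or the (unique) new case. -/
abbrev Arg (X : Type*) := Case X ⊕ Unit

/-- Attack between labelled cases relative to the casebase-plus-default `CB`:
`a` attacks `b` iff they have different outcomes, `a` is at least as specific as `b`,
and no case in `CB` with `a`'s outcome lies strictly between them. -/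
def caseAttacks {X : Type*} [PartialOrder X] (CB : Set (Case X)) (a b : Case X) : Prop :=
  a.2 ≠ b.2 ∧ b.1 ≤ a.1 ∧ ¬ ∃ g ∈ CB, g.1 < a.1 ∧ b.1 < g.1 ∧ g.2 = a.2

/-- The attack relation of the regular AF mined from casebase-plus-default `CB` and
new case characterisation `N`: the new case attacks exactly the irrelevant cases. -/
def attack {X : Type*} [PartialOrder X] (CB : Set (Case X)) (N : X) :
    Arg X → Arg X → Prop
  | Sum.inl a, Sum.inl b => caseAttacks CB a b
  | Sum.inr _, Sum.inl b => ¬ b.1 ≤ N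
  | _, Sum.inr _ => False

/-- The arguments of the AF mined from `D` (with default argument `dflt`) and a new case. -/
def minedArgs {X : Type*} (D : Set (Case X)) (dflt : Case X) : Set (Arg X) :=
  (Sum.inl '' (insert dflt D)) ∪ {Sum.inr ()}

/-- `E` defends `a` in `(Args, att)` iff `a ∈ Args` and every attacker of `a` in `Args`
is attacked by some member of `E`. -/
def Defends {A : Type*} (Args : Set A) (att : A → A → Prop) (E : Set A) (a : A) : Prop :=
  a ∈ Args ∧ ∀ b ∈ Args, att b a → ∃ c ∈ E, att c b

/-- Approximation sequence of the grounded extension: `G 0` is the set of unattacked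
arguments, `G (i+1)` the set of arguments defended by `G i`. -/
def Gseq {A : Type*} (Args : Set A) (att : A → A → Prop) : ℕ → Set A
  | 0 => {a | a ∈ Args ∧ ∀ b ∈ Args, ¬ att b a}
  | i + 1 => {a | Defends Args att (Gseq Args att i) a}

/-- The grounded extension. -/
def grounded {A : Type*} (Args : Set A) (att : A → A → Prop) : Set A :=
  ⋃ i, Gseq Args att i

/-- Grounded extension of the regular AF mined from `D`, default `dflt`, and new case `N`. -/
def minedGrounded {X : Type*} [PartialOrder X] (D : Set (Case X)) (dflt : Case X)
    (N : X) : Set (Arg X) :=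
  grounded (minedArgs D dflt) (attack (insert dflt D) N)

/-- The AACBR-predicted outcome for `N` given `D`: the default outcome iff the default
argument is in the grounded extension, the opposite outcome otherwise. -/
noncomputable def aacbrOutcome {X : Type*} [PartialOrder X] (D : Set (Case X))
    (dflt : Case X) (N : X) : Bool :=
  if Sum.inl dflt ∈ minedGrounded D dflt N then dflt.2 else !dflt.2

/-- A casebase is coherent iff no two of its cases share a characterisation while
having different outcomes. -/
def Coherent {X : Type*} (D : Set (Case X)) : Prop :=
  ∀ a ∈ D, ∀ b ∈ D, a.1 = b.1 → a.2 = b.2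

/-- An example is surprising w.r.t. `D'` iff without it AACBR predicts a different
outcome for its characterisation. -/
noncomputable def Surprising {X : Type*} [PartialOrder X] (dflt : Case X)
    (D' : Set (Case X)) (e : Case X) : Prop :=
  aacbrOutcome (D' \ {e}) dflt e.1 ≠ e.2

/-- An example is sufficient w.r.t. `D'` iff adding it makes AACBR predict its outcome. -/
noncomputable def Sufficient {X : Type*} [PartialOrder X] (dflt : Case X)
    (D' : Set (Case X)) (e : Case X) : Prop :=
  aacbrOutcome (insert e D') dflt e.1 = e.2

/-- An example is includable w.r.t. `D'` iff it is both surprising and sufficient. -/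
noncomputable def Includable {X : Type*} [PartialOrder X] (dflt : Case X)
    (D' : Set (Case X)) (e : Case X) : Prop :=
  Surprising dflt D' e ∧ Sufficient dflt D' e

/-- `S'` is concise w.r.t. `S` iff `S'` is exactly the set of examples of `S` that are
includable w.r.t. `S'`. -/
noncomputable def Concise {X : Type*} [PartialOrder X] (dflt : Case X)
    (S' S : Set (Case X)) : Prop :=
  S' = {e ∈ S | Includable dflt S' e}

/-! The outcome of regular AACBR for `N` is local: the new case is unattacked and attacks every
case `c` with `¬ c.1 ≤ N`, so only the cases below `N` matter. It is also exact: if `(N, y)` is in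
the casebase and `(N, !y)` is not, the outcome is `y`, because every case strictly below `N` with
outcome `!y` is attacked by a grounded case with outcome `y`, namely a minimal case with outcome
`y` strictly above it. Now take a case `(x, y)` in one concise subset but not the other, with `x`
minimal. Both subsets agree strictly below `x`, so by locality `(x, y)` is as surprising for the
other subset as for the first, and by exactness it is sufficient there; hence it is includable
there, and so a member after all. -/

section Grounded

variable {A : Type*} {Args : Set A} {att : A → A → Prop} {E : Set A} {a b : A}

lemma Gseq_subset : ∀ i, Gseq Args att i ⊆ Args
  | 0, _, ha => ha.1
  | _ + 1, _, ha => ha.1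

lemma Defends.mono {F : Set A} (hEF : E ⊆ F) (h : Defends Args att E a) :
    Defends Args att F a :=
  ⟨h.1, fun b hb hba => (h.2 b hb hba).imp fun _ hc => ⟨hEF hc.1, hc.2⟩⟩

lemma defends_of_mem_Gseq_zero (ha : a ∈ Gseq Args att 0) : Defends Args att E a :=
  ⟨ha.1, fun b hb hba => absurd hba (ha.2 b hb)⟩

lemma Gseq_monotone : Monotone (Gseq Args att) := by
  refine monotone_nat_of_le_succ fun i => ?_
  induction i with
  | zero => exact fun _ ha => defends_of_mem_Gseq_zero ha
  | succ i ih => exact fun _ ha => Defends.mono ih ha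

lemma mem_grounded : a ∈ grounded Args att ↔ ∃ i, a ∈ Gseq Args att i :=
  Set.mem_iUnion

lemma Gseq_conflictFree :
    ∀ i, ∀ a ∈ Gseq Args att i, ∀ b ∈ Gseq Args att i, ¬ att b a
  | 0, _, ha, b, hb, hba => ha.2 b hb.1 hba
  | i + 1, _, ha, b, hb, hba => by
    obtain ⟨c, hc, hcb⟩ := ha.2 b hb.1 hba
    obtain ⟨d, hd, hdc⟩ := hb.2 c (Gseq_subset i hc) hcb
    exact Gseq_conflictFree i c hc d hd hdc

lemma not_attack_of_mem_grounded (ha : a ∈ grounded Args att) (hb : b ∈ grounded Args att) :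
    ¬ att b a := by
  obtain ⟨i, hi⟩ := mem_grounded.1 ha
  obtain ⟨j, hj⟩ := mem_grounded.1 hb
  exact Gseq_conflictFree (max i j) a (Gseq_monotone (le_max_left i j) hi)
    b (Gseq_monotone (le_max_right i j) hj)

lemma grounded_subset_of_defends (hE : ∀ a, Defends Args att E a → a ∈ E) :
    grounded Args att ⊆ E := by
  refine Set.iUnion_subset fun i => ?_
  induction i with
  | zero => exact fun a ha => hE a (defends_of_mem_Gseq_zero ha)
  | succ i ih => exact fun a ha => hE a (Defends.mono ih ha)

/-- Each of the finitely many attackers is countered from some stage of `Gseq` on. -/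
lemma mem_grounded_of_defends (hfin : Args.Finite)
    (h : Defends Args att (grounded Args att) a) : a ∈ grounded Args att := by
  have hcounter : ∀ b ∈ {b ∈ Args | att b a},
      ∀ᶠ i in Filter.atTop, ∃ c ∈ Gseq Args att i, att c b := by
    rintro b ⟨hb, hba⟩
    obtain ⟨c, hc, hcb⟩ := h.2 b hb hba
    obtain ⟨i, hi⟩ := mem_grounded.1 hc
    exact Filter.eventually_atTop.2 ⟨i, fun j hj => ⟨c, Gseq_monotone hj hi, hcb⟩⟩
  obtain ⟨i, hi⟩ :=
    ((Filter.eventually_all_finite (hfin.subset (Set.sep_subset _ _))).2 hcounter).exists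
  exact mem_grounded.2 ⟨i + 1, h.1, fun b hb hba => hi b ⟨hb, hba⟩⟩

lemma notMem_grounded_of_attacker_countered_only_by (hb : b ∈ Args) (hba : att b a)
    (h : ∀ c ∈ grounded Args att, att c b → c = a) : a ∉ grounded Args att := by
  intro ha
  obtain ⟨i, hi⟩ := mem_grounded.1 ha
  induction i with
  | zero => exact hi.2 b hb hba
  | succ i ih =>
    obtain ⟨c, hc, hcb⟩ := hi.2 b hb hba
    exact ih (h c (mem_grounded.2 ⟨i, hc⟩) hcb ▸ hc)

end Grounded

section MinedArgs

variable {X : Type*} {S : Set (Case X)} {dflt c : Case X}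

lemma inl_mem_minedArgs : Sum.inl c ∈ minedArgs S dflt ↔ c ∈ insert dflt S := by
  simp [minedArgs]

lemma inr_mem_minedArgs : Sum.inr () ∈ minedArgs S dflt := by
  simp [minedArgs]

lemma minedArgs_finite (hS : S.Finite) : (minedArgs S dflt).Finite :=
  ((hS.insert dflt).image _).union (Set.finite_singleton _)

end MinedArgs

section Mined

variable {X : Type*} [PartialOrder X] {S : Set (Case X)} {dflt b c : Case X} {N : X}

def Relevant (N : X) : Arg X → Prop
  | Sum.inl c => c.1 ≤ N
  | Sum.inr _ => True

def restrict (S : Set (Case X)) (N : X) : Set (Case X) := {c ∈ S | c.1 ≤ N}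

lemma attack_inr_iff {CB : Set (Case X)} {a : Arg X} :
    attack CB N (Sum.inr ()) a ↔ ¬ Relevant N a := by
  cases a <;> simp [attack, Relevant]

lemma inr_mem_minedGrounded : Sum.inr () ∈ minedGrounded S dflt N :=
  mem_grounded.2 ⟨0, inr_mem_minedArgs, fun b _ hb => by cases b <;> exact hb⟩

lemma relevant_of_mem_minedGrounded {a : Arg X} (ha : a ∈ minedGrounded S dflt N) :
    Relevant N a := by
  by_contra h
  exact not_attack_of_mem_grounded ha inr_mem_minedGrounded (attack_inr_iff.2 h)

lemma caseAttacks_restrict_iff (hc : c.1 ≤ N) :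
    caseAttacks (insert dflt (restrict S N)) c b ↔ caseAttacks (insert dflt S) c b := by
  simp only [caseAttacks, restrict, Set.mem_insert_iff, Set.mem_ofPred_eq]
  refine and_congr_right' (and_congr_right' (not_congr (exists_congr fun g => ?_)))
  exact ⟨fun ⟨hg, hgc, hbg⟩ => ⟨hg.imp_right And.left, hgc, hbg⟩,
    fun ⟨hg, hgc, hbg⟩ => ⟨hg.imp_right fun hg => ⟨hg, (hgc.trans_le hc).le⟩, hgc, hbg⟩⟩

lemma attack_restrict_iff {a a' : Arg X} (ha : Relevant N a) :
    attack (insert dflt (restrict S N)) N a a' ↔ attack (insert dflt S) N a a' := by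
  rcases a with c | ⟨⟩ <;> rcases a' with b | ⟨⟩
  · exact caseAttacks_restrict_iff ha
  all_goals rfl

lemma mem_minedArgs_restrict (hdN : dflt.1 ≤ N) {a : Arg X} :
    a ∈ minedArgs (restrict S N) dflt ↔ a ∈ minedArgs S dflt ∧ Relevant N a := by
  rcases a with c | ⟨⟩
  · rcases eq_or_ne c dflt with rfl | hc
    · simp [minedArgs, Relevant, hdN]
    · simp [minedArgs, Relevant, restrict, hc]
  · simp [minedArgs, Relevant]

lemma minedGrounded_restrict (hS : S.Finite) (hdN : dflt.1 ≤ N) :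
    minedGrounded (restrict S N) dflt N = minedGrounded S dflt N := by
  apply subset_antisymm
  · refine grounded_subset_of_defends fun a ha => mem_grounded_of_defends (minedArgs_finite hS)
      ⟨((mem_minedArgs_restrict hdN).1 ha.1).1, fun b hb hba => ?_⟩
    by_cases hbN : Relevant N b
    · obtain ⟨c, hc, hcb⟩ := ha.2 b ((mem_minedArgs_restrict hdN).2 ⟨hb, hbN⟩)
        ((attack_restrict_iff hbN).2 hba)
      exact ⟨c, hc, (attack_restrict_iff (relevant_of_mem_minedGrounded hc)).1 hcb⟩
    · exact ⟨_, inr_mem_minedGrounded, attack_inr_iff.2 hbN⟩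
  · refine grounded_subset_of_defends fun a ha =>
      mem_grounded_of_defends (minedArgs_finite (hS.subset (Set.sep_subset _ _))) ?_
    have haN : Relevant N a := by
      by_contra h
      obtain ⟨c, -, hc⟩ := ha.2 _ inr_mem_minedArgs (attack_inr_iff.2 h)
      cases c <;> exact hc
    refine ⟨(mem_minedArgs_restrict hdN).2 ⟨ha.1, haN⟩, fun b hb hba => ?_⟩
    have hb' := (mem_minedArgs_restrict hdN).1 hb
    obtain ⟨c, hc, hcb⟩ := ha.2 b hb'.1 ((attack_restrict_iff hb'.2).1 hba)
    exact ⟨c, hc, (attack_restrict_iff (relevant_of_mem_minedGrounded hc)).2 hcb⟩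

lemma aacbrOutcome_congr {T : Set (Case X)} (hS : S.Finite) (hT : T.Finite)
    (hdN : dflt.1 ≤ N) (h : restrict S N = restrict T N) :
    aacbrOutcome S dflt N = aacbrOutcome T dflt N := by
  simp only [aacbrOutcome, ← minedGrounded_restrict hS hdN, ← minedGrounded_restrict hT hdN, h]

lemma inl_mem_minedGrounded_of_defends (hS : S.Finite) (hc : c ∈ insert dflt S) (hcN : c.1 ≤ N)
    (h : ∀ d ∈ insert dflt S, d.1 ≤ N → caseAttacks (insert dflt S) d c →
      ∃ e, Sum.inl e ∈ minedGrounded S dflt N ∧ caseAttacks (insert dflt S) e d) :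
    Sum.inl c ∈ minedGrounded S dflt N := by
  refine mem_grounded_of_defends (minedArgs_finite hS)
    ⟨inl_mem_minedArgs.2 hc, fun a ha hac => ?_⟩
  rcases a with d | ⟨⟩
  · by_cases hdN : d.1 ≤ N
    · obtain ⟨e, he, hed⟩ := h d (inl_mem_minedArgs.1 ha) hdN hac
      exact ⟨_, he, hed⟩
    · exact ⟨_, inr_mem_minedGrounded, hdN⟩
  · exact absurd hcN hac

/-- The attacker is a minimal case with outcome `y` strictly above `b`; its own relevant attackers
lie strictly above `b` again, which is what the induction runs on. -/
lemma exists_mem_minedGrounded_caseAttacks {y : Bool} (hS : S.Finite)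
    (hy : (N, y) ∈ insert dflt S) (hny : (N, !y) ∉ insert dflt S)
    (hb : b ∈ insert dflt S) (hbN : b.1 ≤ N) (hby : b.2 = !y) :
    ∃ c, Sum.inl c ∈ minedGrounded S dflt N ∧ caseAttacks (insert dflt S) c b := by
  have hwf : (insert dflt S).WellFoundedOn (fun d b : Case X => b.1 < d.1) :=
    Set.wellFoundedOn_image.1 (((hS.insert dflt).image Prod.fst).wellFoundedOn (r := (· > ·)))
  revert hbN hby
  refine hwf.induction hb (P := fun b => b.1 ≤ N → b.2 = !y →
    ∃ c, Sum.inl c ∈ minedGrounded S dflt N ∧ caseAttacks (insert dflt S) c b) ?_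
  intro b hb ih hbN hby
  have hbN' : b.1 < N := hbN.lt_of_ne fun h => hny ((Prod.ext h hby : b = (N, !y)) ▸ hb)
  obtain ⟨c, ⟨hc, hcy, hbc, hcN⟩, hmin⟩ := Set.Finite.exists_minimalFor Prod.fst
    {c ∈ insert dflt S | c.2 = y ∧ b.1 < c.1 ∧ c.1 ≤ N}
    ((hS.insert dflt).subset (Set.sep_subset _ _)) ⟨(N, y), hy, rfl, hbN', le_rfl⟩
  have hcb : caseAttacks (insert dflt S) c b := by
    refine ⟨by rw [hcy, hby]; exact Bool.ne_not.2 rfl, hbc.le, ?_⟩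
    rintro ⟨g, hg, hgc, hbg, hgy⟩
    exact (hmin ⟨hg, hgy.trans hcy, hbg, (hgc.trans_le hcN).le⟩ hgc.le).not_gt hgc
  refine ⟨c, inl_mem_minedGrounded_of_defends hS hc hcN fun d hd hdN hdc => ?_, hcb⟩
  exact ih d hd (hbc.trans_le hdc.2.1) hdN (Bool.eq_not_of_ne (hcy ▸ hdc.1))

theorem aacbrOutcome_eq_of_mem {y : Bool} (hS : S.Finite) (hdN : dflt.1 ≤ N)
    (hy : (N, y) ∈ S) (hny : (N, !y) ∉ S) : aacbrOutcome S dflt N = y := by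
  by_cases hdflt : dflt = (N, !y)
  · subst hdflt
    -- `(N, y)` and the default attack each other, and nothing else can counter `(N, y)`.
    have hmutual : Sum.inl (N, !y) ∉ minedGrounded S (N, !y) N := by
      refine notMem_grounded_of_attacker_countered_only_by (b := Sum.inl (N, y))
        (inl_mem_minedArgs.2 (Or.inr hy))
        ⟨Bool.ne_not.2 rfl, le_rfl, fun ⟨g, _, hg, hg', _⟩ => (hg.trans hg').false⟩ ?_
      rintro (d | ⟨⟩) hd hdy
      · exact congrArg Sum.inl
          (Prod.ext ((relevant_of_mem_minedGrounded hd).antisymm hdy.2.1) (Bool.eq_not_of_ne hdy.1))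
      · exact absurd le_rfl hdy
    simp [aacbrOutcome, hmutual]
  · have hny' : (N, !y) ∉ insert dflt S := by
      rintro (h | h)
      exacts [hdflt h.symm, hny h]
    have hy' := Set.mem_insert_of_mem dflt hy
    by_cases hdy : dflt.2 = y
    · have hmem : Sum.inl dflt ∈ minedGrounded S dflt N :=
        inl_mem_minedGrounded_of_defends hS (Set.mem_insert _ _) hdN fun d hd hdN' hdd =>
          exists_mem_minedGrounded_caseAttacks hS hy' hny' hd hdN'
            (Bool.eq_not_of_ne (hdy ▸ hdd.1))
      simp [aacbrOutcome, hmem, hdy]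
    · obtain ⟨c, hc, hcd⟩ := exists_mem_minedGrounded_caseAttacks hS hy' hny'
        (Set.mem_insert _ _) hdN (Bool.eq_not_of_ne hdy)
      have hnotMem : Sum.inl dflt ∉ minedGrounded S dflt N :=
        fun h => not_attack_of_mem_grounded h hc hcd
      simp [aacbrOutcome, hnotMem, Bool.eq_not_of_ne hdy]

end Mined

section Concise

variable {X : Type*} [PartialOrder X] {dflt e : Case X} {S S' S'' : Set (Case X)}

lemma restrict_sdiff_singleton {x : X} {y : Bool} (h : (x, !y) ∉ S) :
    restrict (S \ {(x, y)}) x = {c ∈ S | c.1 < x} := by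
  ext c
  simp only [restrict, Set.mem_ofPred_eq, Set.mem_sdiff, Set.mem_singleton_iff]
  constructor
  · rintro ⟨⟨hc, hcy⟩, hcx⟩
    refine ⟨hc, hcx.lt_of_ne fun hx => h ?_⟩
    have hopp : c = (x, !y) := Prod.ext hx (Bool.eq_not_of_ne fun h => hcy (Prod.ext hx h))
    exact hopp ▸ hc
  · rintro ⟨hc, hcx⟩
    exact ⟨⟨hc, fun h => hcx.ne (congrArg Prod.fst h)⟩, hcx.le⟩

lemma Concise.mem_iff (h : Concise dflt S' S) : e ∈ S' ↔ e ∈ S ∧ Includable dflt S' e :=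
  Set.ext_iff.1 h e

lemma Concise.subset (h : Concise dflt S' S) : S' ⊆ S :=
  fun _ he => (h.mem_iff.1 he).1

lemma Concise.coherent (h : Concise dflt S' S) : Coherent S' := by
  have hsuff : ∀ c ∈ S', aacbrOutcome S' dflt c.1 = c.2 := fun c hc => by
    simpa only [Sufficient, Set.insert_eq_of_mem hc] using (h.mem_iff.1 hc).2.2
  intro a ha b hb hab
  rw [← hsuff a ha, ← hsuff b hb, hab]

lemma Concise.mem_of_eq_below (hS : S.Finite) (hd : dflt.1 ≤ e.1)
    (h' : Concise dflt S' S) (h'' : Concise dflt S'' S) (he : e ∈ S')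
    (hbelow : {c ∈ S' | c.1 < e.1} = {c ∈ S'' | c.1 < e.1}) : e ∈ S'' := by
  obtain ⟨x, y⟩ := e
  by_contra he''
  have hS' := hS.subset h'.subset
  have hS'' := hS.subset h''.subset
  obtain ⟨heS, hsurp, -⟩ := h'.mem_iff.1 he
  have hopp' : (x, !y) ∉ S' := fun hopp => Bool.not_ne_self y (h'.coherent _ hopp _ he rfl)
  have hout : aacbrOutcome (S'' \ {(x, !y)}) dflt x = !y := by
    rw [aacbrOutcome_congr hS''.sdiff hS'.sdiff hd (by
      rw [restrict_sdiff_singleton (by rwa [Bool.not_not]), restrict_sdiff_singleton hopp', hbelow])]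
    exact Bool.eq_not_of_ne hsurp
  have hopp'' : (x, !y) ∉ S'' := fun hopp => (h''.mem_iff.1 hopp).2.1 hout
  refine he'' (h''.mem_iff.2 ⟨heS, ?_, ?_⟩)
  · change aacbrOutcome (S'' \ {(x, y)}) dflt x ≠ y
    rw [Set.sdiff_singleton_eq_self he'', ← Set.sdiff_singleton_eq_self hopp'', hout]
    exact Bool.not_ne_self y
  · refine aacbrOutcome_eq_of_mem (hS''.insert _) hd (Set.mem_insert _ _) ?_
    rintro (h | h)
    exacts [Bool.not_ne_self y (congrArg Prod.snd h), hopp'' h]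

end Concise

theorem concise_subset_unique_general {X : Type*} [PartialOrder X]
    (D : Set (Case X)) (hfin : D.Finite)
    (dflt : Case X) (hd : ∀ x : X, dflt.1 ≤ x)
    (D' D'' : Set (Case X))
    (h1 : Concise dflt D' D) (h2 : Concise dflt D'' D) :
    D' = D'' := by
  by_contra hne
  obtain ⟨e, he, hmin⟩ := Set.Finite.exists_minimalFor Prod.fst (symmDiff D' D'')
    (hfin.subset (Set.symmDiff_subset_union.trans (Set.union_subset h1.subset h2.subset)))
    (Set.symmDiff_nonempty.2 hne)
  have hbelow : {c ∈ D' | c.1 < e.1} = {c ∈ D'' | c.1 < e.1} := by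
    ext c
    simp only [Set.mem_ofPred_eq]
    refine and_congr_left fun hc => ?_
    by_contra hdiff
    exact (hmin (Set.mem_symmDiff.2 (by tauto)) hc.le).not_gt hc
  rcases Set.mem_symmDiff.1 he with ⟨he', he''⟩ | ⟨he'', he'⟩
  · exact he'' (h1.mem_of_eq_below hfin (hd _) h2 he' hbelow)
  · exact he' (h2.mem_of_eq_below hfin (hd _) h1 he'' hbelow.symm)

/-- Uniqueness of concise subsets: for regular AACBR, any two concise subsets of a
(finite) casebase `D` w.r.t. `D` are equal. -/
theorem concise_subset_unique {X : Type*} [PartialOrder X]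
    (D : Set (Case X)) (hfin : D.Finite)
    (dflt : Case X) (hd : ∀ x : X, dflt.1 ≤ x)
    (D' D'' : Set (Case X)) (hD' : D' ⊆ D) (hD'' : D'' ⊆ D)
    (h1 : Concise dflt D' D) (h2 : Concise dflt D'' D) :
    D' = D'' :=
  concise_subset_unique_general D hfin dflt hd D' D'' h1 h2
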